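/- For every m ≥ 2, consider the caterpillar T_m(3, 0, …, 0, 3) with three pendant leaves at each of the two endpoint spine vertices and no other leaves, and let w be the edge vector equal to 3 on every spine edge and equal to 1 on every pendant edge. Then R_{T_m(3,0,…,0,3)} w = 0 and λ_max(R_{T_m(3,0,…,0,3)}) = 0. -/

import Mathlib

open Finset Matrix

/-- The Ricci matrix of a graph, indexed by edges: diagonal entry `-(1/d_x + 1/d_y)`
for an edge `{x,y}`, entry `1/d_z` for distinct edges sharing the vertex `z`, and `0`
for disjoint edges.  Here the degree of `v` is `(G.neighborSet v).ncard`. -/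
noncomputable def ricciMatrix {V : Type*} (G : SimpleGraph V) [Fintype V] [DecidableEq V] :
    Matrix G.edgeSet G.edgeSet ℝ := fun e f =>
  if (e : Sym2 V) = (f : Sym2 V) then
    -∑ v : V, if v ∈ (e : Sym2 V) then 1 / ((G.neighborSet v).ncard : ℝ) else 0
  else
    ∑ v : V, if v ∈ (e : Sym2 V) ∧ v ∈ (f : Sym2 V) then 1 / ((G.neighborSet v).ncard : ℝ) else 0

/-- The largest eigenvalue of a real matrix. -/
noncomputable def lambdaMax {n : Type*} [Fintype n] (M : Matrix n n ℝ) : ℝ :=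
  sSup {t : ℝ | ∃ w : n → ℝ, w ≠ 0 ∧ M.mulVec w = t • w}

/-- The caterpillar `T_m(a)`: a spine path `v_0 — v_1 — ⋯ — v_{m-1}` (the `Sum.inl`
vertices) together with `a i` pendant leaves attached to the spine vertex `v i`
(the `Sum.inr ⟨i, _⟩` vertices). -/
def caterpillar (m : ℕ) (a : Fin m → ℕ) :
    SimpleGraph (Fin m ⊕ (Σ i : Fin m, Fin (a i))) where
  Adj x y := match x, y with
    | .inl i, .inl j => i.val + 1 = j.val ∨ j.val + 1 = i.val
    | .inl i, .inr t => i = t.1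
    | .inr t, .inl i => i = t.1
    | .inr _, .inr _ => False
  symm := by
    constructor
    rintro (i | t) (j | s) h
    · exact Or.symm h
    · exact h
    · exact h
    · exact h
  loopless := by
    constructor
    rintro (i | t) h
    · omega
    · exact h

instance (m : ℕ) (a : Fin m → ℕ) : DecidableRel (caterpillar m a).Adj := fun x y =>
  match x, y with
  | .inl _, .inl _ => inferInstanceAs (Decidable (_ ∨ _))
  | .inl i, .inr t => inferInstanceAs (Decidable (i = t.1))
  | .inr t, .inl i => inferInstanceAs (Decidable (i = t.1))
  | .inr _, .inr _ => isFalse id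

/-- The endpoint-only leaf-count sequence `(a, 0, …, 0, b)` of length `m`. -/
def endpointSeq (m a b : ℕ) : Fin m → ℕ :=
  fun i => if i.val = 0 then a else if i.val = m - 1 then b else 0

/-- The endpoint-only caterpillar `C_m(a,b) = T_m(a, 0, …, 0, b)`. -/
def endpointCaterpillar (m a b : ℕ) :
    SimpleGraph (Fin m ⊕ (Σ i : Fin m, Fin (endpointSeq m a b i))) :=
  caterpillar m (endpointSeq m a b)

instance (m a b : ℕ) : DecidableRel (endpointCaterpillar m a b).Adj :=
  inferInstanceAs (DecidableRel (caterpillar m (endpointSeq m a b)).Adj)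

open Classical in
/-- The edge vector on a caterpillar that equals `3` on every spine edge (an edge both
of whose endpoints are spine vertices) and `1` on every pendant edge. -/
noncomputable def spinePendantVector (m : ℕ) (a : Fin m → ℕ) :
    (caterpillar m a).edgeSet → ℝ := fun e =>
  if ∃ i j : Fin m, (e : Sym2 (Fin m ⊕ (Σ i : Fin m, Fin (a i)))) = s(Sum.inl i, Sum.inl j)
  then 3 else 1

/-!
The Ricci matrix is a Metzler matrix (nonnegative off the diagonal), so by a Perron–Frobenius
argument the eigenvalue of a positive eigenvector dominates every real eigenvalue: rescale any
other eigenvector until it touches the positive one from below at some coordinate and compare the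
two eigen-equations there. It therefore suffices that the positive vector `w` is a null vector.
At an edge `e = xy` one has `(R w)_e = Σ_{v ∈ e} (S_v - 2 w_e) / d_v`, where `S_v` is the sum of
`w` over the edges at `v`. In `T_m(3,0,…,0,3)` every spine vertex has `S = 6` (two spine edges,
or one spine edge and three pendant edges), every leaf has `S = 1`, and the spine vertices that
carry leaves have degree `4`; so a spine edge contributes `0 / d_x + 0 / d_y` and a pendant edge
`(6 - 2) / 4 + (1 - 2) / 1 = 0`.
-/

namespace Matrix

variable {n : Type*} [Fintype n] {M : Matrix n n ℝ}

lemma mulVec_apply_nonneg_of_offDiag_nonneg (hM : ∀ i j, i ≠ j → 0 ≤ M i j) {d : n → ℝ}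
    (hd : 0 ≤ d) {i : n} (hdi : d i = 0) : 0 ≤ (M *ᵥ d) i :=
  Finset.sum_nonneg fun j _ => by
    obtain rfl | hij := eq_or_ne i j
    · simp [hdi]
    · exact mul_nonneg (hM i j hij) (hd j)

lemma le_of_mulVec_eq_smul_of_pos (hM : ∀ i j, i ≠ j → 0 ≤ M i j) {w : n → ℝ}
    (hw : ∀ i, 0 < w i) {μ : ℝ} (hMw : M *ᵥ w = μ • w) {t : ℝ} {v : n → ℝ} (hv : v ≠ 0)
    (hMv : M *ᵥ v = t • v) : t ≤ μ := by
  obtain ⟨k, hk⟩ := Function.ne_iff.mp hv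
  have : Nonempty n := ⟨k⟩
  obtain ⟨i, hi⟩ := Finite.exists_max fun j => |v j| / w j
  have hratio : ∀ j, |v j| * w i ≤ |v i| * w j := fun j => by
    have := hi j
    rwa [div_le_div_iff₀ (hw j) (hw i)] at this
  have hvi : v i ≠ 0 := by
    intro h0
    have := hratio k
    rw [h0, abs_zero, zero_mul] at this
    exact hk (abs_nonpos_iff.mp (nonpos_of_mul_nonpos_left this (hw i)))
  set u := (w i / v i) • v with hu
  have hui : u i = w i := by simp [hu, div_mul_cancel₀ _ hvi]
  have hle : u ≤ w := fun j => by
    calc u j ≤ |u j| := le_abs_self _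
      _ = w i * |v j| / |v i| := by
          simp [hu, abs_mul, abs_div, abs_of_pos (hw i)]; ring
      _ ≤ w j := by
          rw [div_le_iff₀ (abs_pos.mpr hvi)]; linarith [hratio j]
  have hgap := mulVec_apply_nonneg_of_offDiag_nonneg hM (sub_nonneg.mpr hle)
    (show (w - u) i = 0 by simp [hui])
  rw [mulVec_sub, hMw, hu, mulVec_smul, hMv] at hgap
  have hgap' : t * w i ≤ μ * w i := by
    have hcancel : w i / v i * (t * v i) = t * w i := by field_simp
    simpa [hu, hcancel] using hgap
  exact le_of_mul_le_mul_right hgap' (hw i)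

lemma lambdaMax_eq_of_mulVec_eq_smul_of_pos [Nonempty n] (hM : ∀ i j, i ≠ j → 0 ≤ M i j)
    {w : n → ℝ} (hw : ∀ i, 0 < w i) {μ : ℝ} (hMw : M *ᵥ w = μ • w) : lambdaMax M = μ := by
  have hμ : μ ∈ {t : ℝ | ∃ v : n → ℝ, v ≠ 0 ∧ M *ᵥ v = t • v} :=
    ⟨w, fun h => (hw (Classical.arbitrary n)).ne' (congrFun h _), hMw⟩
  have hbound : ∀ t ∈ {t : ℝ | ∃ v : n → ℝ, v ≠ 0 ∧ M *ᵥ v = t • v}, t ≤ μ :=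
    fun _ ⟨_, hv, hMv⟩ => le_of_mulVec_eq_smul_of_pos hM hw hMw hv hMv
  exact le_antisymm (csSup_le ⟨μ, hμ⟩ hbound) (le_csSup ⟨μ, hbound⟩ hμ)

end Matrix

lemma SimpleGraph.ncard_neighborSet_eq_degree {V : Type*} [Fintype V] (G : SimpleGraph V)
    [DecidableRel G.Adj] (v : V) : (G.neighborSet v).ncard = G.degree v := by
  rw [← G.card_neighborFinset_eq_degree, ← Set.ncard_coe_finset, G.coe_neighborFinset]

lemma Sym2.sum_ite_mem_mk {V : Type*} [Fintype V] [DecidableEq V] {x y : V} (hxy : x ≠ y)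
    (g : V → ℝ) : (∑ v : V, if v ∈ s(x, y) then g v else 0) = g x + g y := by
  have hpair : Finset.univ.filter (· ∈ s(x, y)) = {x, y} := by ext; simp
  rw [← Finset.sum_filter, hpair, Finset.sum_pair hxy]

section Ricci

variable {V : Type*} [Fintype V] [DecidableEq V] (G : SimpleGraph V)

lemma ricciMatrix_nonneg_of_ne {e f : G.edgeSet} (h : e ≠ f) : 0 ≤ ricciMatrix G e f := by
  rw [ricciMatrix, if_neg (Subtype.coe_ne_coe.mpr h)]
  exact Finset.sum_nonneg fun v _ => by split <;> positivity

lemma ricciMatrix_apply (e f : G.edgeSet) :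
    ricciMatrix G e f =
      (∑ v : V, if v ∈ (e : Sym2 V) ∧ v ∈ (f : Sym2 V) then 1 / ((G.neighborSet v).ncard : ℝ)
        else 0) -
      if e = f then 2 * ∑ v : V, if v ∈ (e : Sym2 V) then 1 / ((G.neighborSet v).ncard : ℝ)
        else 0 else 0 := by
  rw [ricciMatrix]
  split_ifs with h h' h'
  · simp only [and_self, h]; ring
  · exact absurd (Subtype.ext h) h'
  · exact absurd (congrArg Subtype.val h') h
  · rw [sub_zero]

variable [DecidableRel G.Adj]

lemma ricciMatrix_mulVec_apply (w : G.edgeSet → ℝ) (e : G.edgeSet) :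
    (ricciMatrix G *ᵥ w) e =
      ∑ v : V, if v ∈ (e : Sym2 V) then
        ((∑ f : G.edgeSet, if v ∈ (f : Sym2 V) then w f else 0) - 2 * w e) /
          ((G.neighborSet v).ncard : ℝ) else 0 := by
  simp only [mulVec, dotProduct, ricciMatrix_apply, sub_mul, Finset.sum_sub_distrib, ite_mul,
    zero_mul, Finset.sum_ite_eq, Finset.mem_univ, if_true, Finset.sum_mul]
  rw [Finset.sum_comm, Finset.mul_sum, Finset.sum_mul, ← Finset.sum_sub_distrib]
  refine Finset.sum_congr rfl fun v _ => ?_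
  by_cases hv : v ∈ (e : Sym2 V)
  · simp only [hv, true_and, if_true, ← mul_ite_zero, ← Finset.mul_sum]
    ring
  · simp [hv]

lemma SimpleGraph.sum_incident_edges (W : Sym2 V → ℝ) (v : V) :
    (∑ f : G.edgeSet, if v ∈ (f : Sym2 V) then W f else 0) =
      ∑ u ∈ G.neighborFinset v, W s(v, u) := by
  rw [← Finset.sum_filter]
  symm
  refine Finset.sum_bij (fun u hu => ⟨s(v, u), (G.mem_neighborFinset v u).mp hu⟩) (by simp)
    (fun u _ u' _ h => Sym2.congr_right.mp (congrArg Subtype.val h)) ?_ (fun _ _ => rfl)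
  rintro ⟨f, hf⟩ hv
  replace hv : v ∈ f := (Finset.mem_filter.mp hv).2
  refine ⟨Sym2.Mem.other hv, ?_, Subtype.ext (Sym2.other_spec hv)⟩
  rw [G.mem_neighborFinset, ← SimpleGraph.mem_edgeSet, Sym2.other_spec hv]
  exact hf

lemma ricciMatrix_mulVec_apply_mk (W : Sym2 V → ℝ) {x y : V} (h : G.Adj x y) :
    (ricciMatrix G *ᵥ fun f => W f) ⟨s(x, y), h⟩ =
      (∑ u ∈ G.neighborFinset x, W s(x, u) - 2 * W s(x, y)) / G.degree x +
      (∑ u ∈ G.neighborFinset y, W s(y, u) - 2 * W s(x, y)) / G.degree y := by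
  rw [ricciMatrix_mulVec_apply]
  simp only [G.sum_incident_edges, G.ncard_neighborSet_eq_degree]
  exact Sym2.sum_ite_mem_mk h.ne
    fun v => (∑ u ∈ G.neighborFinset v, W s(v, u) - 2 * W s(x, y)) / G.degree v

lemma ricciMatrix_mulVec_eq_zero_of_forall_adj (W : Sym2 V → ℝ)
    (hW : ∀ x y, G.Adj x y →
      (∑ u ∈ G.neighborFinset x, W s(x, u) - 2 * W s(x, y)) / G.degree x +
      (∑ u ∈ G.neighborFinset y, W s(y, u) - 2 * W s(x, y)) / G.degree y = 0) :
    (ricciMatrix G *ᵥ fun f => W f) = 0 := by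
  funext ⟨e, he⟩
  induction e using Sym2.ind with
  | _ x y => exact (ricciMatrix_mulVec_apply_mk G W he).trans (hW x y he)

end Ricci

lemma Fin.sum_ite_adjacent {m : ℕ} (i : Fin m) (p : ℝ) :
    (∑ j : Fin m, if i.val + 1 = j.val ∨ j.val + 1 = i.val then p else 0) =
      (if i.val + 1 < m then p else 0) + (if 0 < i.val then p else 0) := by
  rw [Fin.sum_univ_eq_sum_range (fun k => if i.val + 1 = k ∨ k + 1 = i.val then p else 0)]
  have hsplit : ∀ k, (if i.val + 1 = k ∨ k + 1 = i.val then p else 0) =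
      (if i.val + 1 = k then p else 0) + (if k + 1 = i.val then p else 0) := fun k => by
    split_ifs <;> first | omega | simp
  simp only [hsplit, Finset.sum_add_distrib, Finset.sum_ite_eq, Finset.mem_range]
  obtain ⟨_ | i, hi⟩ := i
  · simp
  · simp [Finset.sum_ite_eq', show i < m by omega]

open Sum

section Caterpillar

variable {m : ℕ} {a : Fin m → ℕ}

@[simp] lemma caterpillar_adj_inl_inl {i j : Fin m} :
    (caterpillar m a).Adj (inl i) (inl j) ↔ i.val + 1 = j.val ∨ j.val + 1 = i.val := Iff.rfl

@[simp] lemma caterpillar_adj_inl_inr {i : Fin m} {t : Σ i, Fin (a i)} :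
    (caterpillar m a).Adj (inl i) (inr t) ↔ i = t.1 := Iff.rfl

@[simp] lemma caterpillar_adj_inr_inl {t : Σ i, Fin (a i)} {i : Fin m} :
    (caterpillar m a).Adj (inr t) (inl i) ↔ i = t.1 := Iff.rfl

@[simp] lemma caterpillar_adj_inr_inr {t s : Σ i, Fin (a i)} :
    ¬ (caterpillar m a).Adj (inr t) (inr s) := id

lemma caterpillar_neighborFinset_inr (t : Σ i, Fin (a i)) :
    (caterpillar m a).neighborFinset (inr t) = {inl t.1} := by
  ext (j | s) <;> simp [eq_comm]

lemma caterpillar_sum_neighborFinset_inl (i : Fin m) {F : Fin m ⊕ (Σ i, Fin (a i)) → ℝ}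
    {p q : ℝ} (hp : ∀ j, F (inl j) = p) (hq : ∀ t, F (inr t) = q) :
    ∑ u ∈ (caterpillar m a).neighborFinset (inl i), F u =
      (if i.val + 1 < m then p else 0) + (if 0 < i.val then p else 0) + a i * q := by
  rw [SimpleGraph.neighborFinset_eq_filter, Finset.sum_filter, Fintype.sum_sum_type,
    ← Fin.sum_ite_adjacent]
  simp only [caterpillar_adj_inl_inl, caterpillar_adj_inl_inr, hp, hq, Fintype.sum_sigma]
  congr 1
  rw [Finset.sum_eq_single_of_mem i (Finset.mem_univ i) fun j _ hji => by simp [hji.symm]]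
  simp

end Caterpillar

section SpinePendant

variable {m : ℕ} {a : Fin m → ℕ}

open Classical in
noncomputable def spinePendantWeight (m : ℕ) (a : Fin m → ℕ) :
    Sym2 (Fin m ⊕ Σ i : Fin m, Fin (a i)) → ℝ :=
  fun p => if ∃ i j : Fin m, p = s(inl i, inl j) then 3 else 1

lemma spinePendantVector_eq_weight :
    spinePendantVector m a = fun e : (caterpillar m a).edgeSet => spinePendantWeight m a e := rfl

lemma spinePendantWeight_inl_inl (i j : Fin m) : spinePendantWeight m a s(inl i, inl j) = 3 :=
  if_pos ⟨i, j, rfl⟩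

lemma spinePendantWeight_of_inr_mem {p : Sym2 (Fin m ⊕ Σ i : Fin m, Fin (a i))}
    {t : Σ i : Fin m, Fin (a i)} (h : inr t ∈ p) : spinePendantWeight m a p = 1 := by
  refine if_neg ?_
  rintro ⟨i, j, rfl⟩
  simp at h

lemma spinePendantVector_pos (e : (caterpillar m a).edgeSet) : 0 < spinePendantVector m a e := by
  rw [spinePendantVector]
  split <;> norm_num

lemma caterpillar_sum_spinePendantWeight_inr (t : Σ i : Fin m, Fin (a i)) :
    ∑ u ∈ (caterpillar m a).neighborFinset (inr t), spinePendantWeight m a s(inr t, u) = 1 := by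
  rw [caterpillar_neighborFinset_inr, Finset.sum_singleton,
    spinePendantWeight_of_inr_mem (Sym2.mem_mk_left _ _)]

lemma caterpillar_degree_inr (t : Σ i : Fin m, Fin (a i)) :
    (caterpillar m a).degree (inr t) = 1 := by
  rw [← SimpleGraph.card_neighborFinset_eq_degree, caterpillar_neighborFinset_inr,
    Finset.card_singleton]

end SpinePendant

section Endpoint

variable {m : ℕ}

lemma eq_zero_or_eq_sub_one_of_endpointSeq_pos {a b : ℕ} {i : Fin m}
    (h : 0 < endpointSeq m a b i) : i.val = 0 ∨ i.val = m - 1 := by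
  unfold endpointSeq at h
  split_ifs at h <;> omega

lemma caterpillar_endpointSeq_sum_spinePendantWeight_inl (i : Fin m) (hm : 2 ≤ m) :
    ∑ u ∈ (caterpillar m (endpointSeq m 3 3)).neighborFinset (inl i),
      spinePendantWeight m _ s(inl i, u) = 6 := by
  rw [caterpillar_sum_neighborFinset_inl i (p := 3) (q := 1) (spinePendantWeight_inl_inl i)
    fun t => spinePendantWeight_of_inr_mem (Sym2.mem_mk_right _ _)]
  have := i.isLt
  unfold endpointSeq
  split_ifs <;> first | omega | norm_num

lemma caterpillar_endpointSeq_degree_inl (i : Fin m) (hm : 2 ≤ m)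
    (hi : 0 < endpointSeq m 3 3 i) :
    ((caterpillar m (endpointSeq m 3 3)).degree (inl i) : ℝ) = 4 := by
  rw [← SimpleGraph.card_neighborFinset_eq_degree, Finset.card_eq_sum_ones, Nat.cast_sum,
    caterpillar_sum_neighborFinset_inl i (p := 1) (q := 1) (fun _ => Nat.cast_one)
      fun _ => Nat.cast_one]
  have := i.isLt
  have := eq_zero_or_eq_sub_one_of_endpointSeq_pos hi
  unfold endpointSeq
  split_ifs <;> first | omega | norm_num

lemma ricciMatrix_caterpillar_endpointSeq_mulVec_spinePendantVector (hm : 2 ≤ m) :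
    ricciMatrix (caterpillar m (endpointSeq m 3 3)) *ᵥ
      spinePendantVector m (endpointSeq m 3 3) = 0 := by
  rw [spinePendantVector_eq_weight]
  refine ricciMatrix_mulVec_eq_zero_of_forall_adj _ _ ?_
  have pendant : ∀ (i : Fin m) (t : Σ i, Fin (endpointSeq m 3 3 i)), i = t.1 →
      (6 - 2 * 1) / ((caterpillar m (endpointSeq m 3 3)).degree (inl i) : ℝ) +
        (1 - 2 * 1) / ((caterpillar m (endpointSeq m 3 3)).degree (inr t) : ℝ) = 0 := by
    rintro i t rfl
    rw [caterpillar_endpointSeq_degree_inl t.1 hm t.2.pos, caterpillar_degree_inr]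
    norm_num
  rintro (i | t) (j | s) hadj
  · norm_num [spinePendantWeight_inl_inl,
      caterpillar_endpointSeq_sum_spinePendantWeight_inl _ hm]
  · rw [caterpillar_endpointSeq_sum_spinePendantWeight_inl i hm,
      caterpillar_sum_spinePendantWeight_inr,
      spinePendantWeight_of_inr_mem (Sym2.mem_mk_right _ _)]
    exact pendant i s hadj
  · rw [caterpillar_endpointSeq_sum_spinePendantWeight_inl j hm,
      caterpillar_sum_spinePendantWeight_inr,
      spinePendantWeight_of_inr_mem (Sym2.mem_mk_left _ _), add_comm]
    exact pendant j t hadj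
  · exact absurd hadj caterpillar_adj_inr_inr

end Endpoint

/-- **The stable zero family `(3, 0, …, 0, 3)`.**
For each `m ≥ 2`, the edge vector on `T_m(3,0,…,0,3)` equal to `3` on spine edges and
`1` on pendant edges is a null vector of the Ricci matrix, and
`λ_max(R_{T_m(3,0,…,0,3)}) = 0`. -/
theorem stable_zero_family (m : ℕ) (hm : 2 ≤ m) :
    (ricciMatrix (endpointCaterpillar m 3 3)).mulVec
        (spinePendantVector m (endpointSeq m 3 3)) = 0 ∧
    lambdaMax (ricciMatrix (endpointCaterpillar m 3 3)) = 0 := by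
  have hnull : ricciMatrix (endpointCaterpillar m 3 3) *ᵥ
      spinePendantVector m (endpointSeq m 3 3) = 0 :=
    ricciMatrix_caterpillar_endpointSeq_mulVec_spinePendantVector hm
  have : Nonempty (endpointCaterpillar m 3 3).edgeSet :=
    ⟨⟨s(inl ⟨0, by omega⟩, inl ⟨1, by omega⟩), Or.inl rfl⟩⟩
  exact ⟨hnull, lambdaMax_eq_of_mulVec_eq_smul_of_pos
    (M := ricciMatrix (endpointCaterpillar m 3 3)) (fun _ _ => ricciMatrix_nonneg_of_ne _)
    spinePendantVector_pos (hnull.trans (zero_smul ℝ _).symm)⟩
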